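/- Let Q₀ be a probability measure on ℝ, not a point mass, and let Γ be an open interval of parameters β for which Z(β) = ∫ exp(βx) dQ₀(x) < ∞; for β ∈ Γ let Q_β be the probability measure with dQ_β/dQ₀ = exp(βx)/Z(β), with mean μ_β and variance σ²_β. If the variance is nondecreasing along the family, i.e. σ²_s ≤ σ²_t whenever s ≤ t in Γ, then for all α ≤ β in Γ, D(Q_α‖Q_β) ≥ (μ_α − μ_β)² / (2 σ²_β). -/

import Mathlib

open MeasureTheory ProbabilityTheory Real

/- Kullback-Leibler divergence `D(P‖Q)`: equal to `∫ log(dP/dQ) dP` when `P ≪ Q` and the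
integrand is `P`-integrable, and `+∞` otherwise. -/
open Classical in
noncomputable def klDiv {Ω : Type*} [MeasurableSpace Ω] (P Q : Measure Ω) : EReal :=
  if P ≪ Q ∧ Integrable (fun ω => Real.log (P.rnDeriv Q ω).toReal) P
  then ((∫ ω, Real.log (P.rnDeriv Q ω).toReal ∂P : ℝ) : EReal)
  else ⊤

/-
Let `K` be the cumulant generating function of `Q₀`. Then `Q t` is the exponential tilt of `Q₀`,
`μ t = K' t`, `σ²_t = K'' t`, and `D(Q_α‖Q_β) = K β - K α - (β - α) K' α` is the Bregman
divergence of `K`. As `0 ≤ K'' ≤ σ²_β` on `[α, β]`, the function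
`u ↦ K u - K' α * u - (K' u - K' α)² / (2 σ²_β)` has derivative
`(K' u - K' α)(1 - K'' u / σ²_β) ≥ 0` there, and comparing its values at `α` and `β` gives
the bound.
-/

open Set

lemma sq_sub_div_two_mul_le_of_hasDerivAt {Λ g v : ℝ → ℝ} {a b M : ℝ} (hab : a ≤ b)
    (hM : 0 ≤ M) (hΛ : ∀ t ∈ Icc a b, HasDerivAt Λ (g t) t)
    (hg : ∀ t ∈ Icc a b, HasDerivAt g (v t) t) (hv : ∀ t ∈ Icc a b, v t ∈ Icc 0 M) :
    (g a - g b) ^ 2 / (2 * M) ≤ (a - b) * g a - (Λ a - Λ b) := by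
  have hg_mono : MonotoneOn g (Icc a b) :=
    monotoneOn_of_hasDerivWithinAt_nonneg (convex_Icc a b)
      (fun t ht ↦ (hg t ht).continuousAt.continuousWithinAt)
      (fun t ht ↦ (hg t (interior_subset ht)).hasDerivWithinAt)
      (fun t ht ↦ (hv t (interior_subset ht)).1)
  -- For `M = 0` every division by `M` below is `0`, and the argument goes through unchanged.
  set F : ℝ → ℝ := fun u ↦ Λ u - g a * u - (g u - g a) ^ 2 / (2 * M)
  have hF : ∀ t ∈ Icc a b,
      HasDerivAt F (g t - g a - (g t - g a) * v t / M) t := by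
    intro t ht
    refine (((hΛ t ht).sub ((hasDerivAt_id' t).const_mul (g a))).sub
      ((((hg t ht).sub_const (g a)).pow 2).div_const (2 * M))).congr_deriv ?_
    push_cast
    ring
  have hF_mono : MonotoneOn F (Icc a b) :=
    monotoneOn_of_hasDerivWithinAt_nonneg (convex_Icc a b)
      (fun t ht ↦ (hF t ht).continuousAt.continuousWithinAt)
      (fun t ht ↦ (hF t (interior_subset ht)).hasDerivWithinAt)
      (fun t ht ↦ by
        have ht' := interior_subset ht
        have hga : 0 ≤ g t - g a := sub_nonneg.2 (hg_mono (left_mem_Icc.2 hab) ht' ht'.1)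
        have hle : (g t - g a) * v t / M ≤ g t - g a :=
          div_le_of_le_mul₀ hM hga (mul_le_mul_of_nonneg_left (hv t ht').2 hga)
        linarith)
  have hFab := hF_mono (left_mem_Icc.2 hab) (right_mem_Icc.2 hab) hab
  simp only [F, sub_self, ne_eq, OfNat.ofNat_ne_zero, not_false_eq_true, zero_pow, zero_div] at hFab
  rw [← neg_sub (g b), neg_sq]
  linarith

namespace ProbabilityTheory

variable {Ω : Type*} [MeasurableSpace Ω] {μ : Measure Ω} {X : Ω → ℝ} {s t : ℝ}

lemma hasDerivAt_cgf (ht : t ∈ interior (integrableExpSet X μ)) :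
    HasDerivAt (cgf X μ) (μ.tilted (t * X ·))[X] t := by
  rw [integral_tilted_mul_self ht]
  exact (analyticAt_cgf ht).differentiableAt.hasDerivAt

lemma hasDerivAt_integral_tilted_mul_self (ht : t ∈ interior (integrableExpSet X μ)) :
    HasDerivAt (fun s ↦ (μ.tilted (s * X ·))[X]) Var[X; μ.tilted (t * X ·)] t := by
  have hmean : deriv (cgf X μ) =ᶠ[nhds t] fun s ↦ (μ.tilted (s * X ·))[X] := by
    filter_upwards [isOpen_interior.mem_nhds ht] with s hs
    exact (integral_tilted_mul_self hs).symm
  rw [variance_tilted_mul ht, iteratedDeriv_succ, iteratedDeriv_one]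
  exact ((analyticAt_cgf ht).deriv.differentiableAt.hasDerivAt).congr_of_eventuallyEq hmean.symm

lemma klDiv_tilted_mul [NeZero μ] (hs : s ∈ interior (integrableExpSet X μ))
    (ht : t ∈ integrableExpSet X μ) :
    klDiv (μ.tilted (s * X ·)) (μ.tilted (t * X ·))
      = ((s - t) * (μ.tilted (s * X ·))[X] - (cgf X μ s - cgf X μ t) : ℝ) := by
  set Qt := μ.tilted (t * X ·)
  have hQs : IsProbabilityMeasure (μ.tilted (s * X ·)) :=
    isProbabilityMeasure_tilted (interior_subset (s := integrableExpSet X μ) hs)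
  have htilt : μ.tilted (s * X ·) = Qt.tilted ((s - t) * X ·) := by
    rw [tilted_tilted ht]
    congr with ω
    simp only [Pi.add_apply]
    ring
  have hmgf : ∫ ω, exp ((s - t) * X ω) ∂Qt = mgf X μ s / mgf X μ t := by
    rw [integral_exp_tilted]
    congr with ω
    simp only [Pi.add_apply]
    ring_nf
  have hint : Integrable (fun ω ↦ exp ((s - t) * X ω)) Qt := by
    rw [integrable_tilted_iff ht]
    refine (interior_subset (s := integrableExpSet X μ) hs).congr (.of_forall fun ω ↦ ?_)
    dsimp only
    rw [smul_eq_mul, ← exp_add]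
    ring_nf
  have hllr : (fun ω ↦ log ((μ.tilted (s * X ·)).rnDeriv Qt ω).toReal)
      =ᵐ[μ.tilted (s * X ·)] fun ω ↦ (s - t) * X ω - (cgf X μ s - cgf X μ t) := by
    rw [htilt]
    refine (tilted_absolutelyContinuous _ _).ae_le ?_
    refine (log_rnDeriv_tilted_left_self hint).trans (.of_forall fun ω ↦ ?_)
    rw [hmgf, log_div (mgf_pos_iff.2 (interior_subset (s := integrableExpSet X μ) hs)).ne'
      (mgf_pos_iff.2 ht).ne', cgf, cgf]
  have hX : Integrable X (μ.tilted (s * X ·)) := (memLp_tilted_mul hs 1).integrable le_rfl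
  have hint' :
      Integrable (fun ω ↦ (s - t) * X ω - (cgf X μ s - cgf X μ t)) (μ.tilted (s * X ·)) :=
    (hX.const_mul _).sub (integrable_const _)
  rw [klDiv, if_pos ⟨htilt ▸ tilted_absolutelyContinuous _ _, hint'.congr hllr.symm⟩,
    integral_congr_ae hllr, integral_sub (hX.const_mul _) (integrable_const _), integral_const_mul]
  simp

end ProbabilityTheory

theorem stmt_2_general
    (Q₀ : Measure ℝ) [IsProbabilityMeasure Q₀]
    (Γ : Set ℝ) (hΓopen : IsOpen Γ) (hΓconn : Γ.OrdConnected)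
    (hZ : ∀ β ∈ Γ, Integrable (fun x => Real.exp (β * x)) Q₀)
    (Q : ℝ → Measure ℝ)
    (hQ : ∀ β ∈ Γ, Q β = Q₀.withDensity (fun x =>
      ENNReal.ofReal (Real.exp (β * x) / ∫ y, Real.exp (β * y) ∂Q₀)))
    (μ : ℝ → ℝ) (hμ : ∀ β ∈ Γ, μ β = ∫ x, x ∂(Q β))
    (hmono : ∀ s ∈ Γ, ∀ t ∈ Γ, s ≤ t → variance id (Q s) ≤ variance id (Q t))
    (α β : ℝ) (hα : α ∈ Γ) (hβ : β ∈ Γ) (hαβ : α ≤ β) :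
    (((μ α - μ β) ^ 2 / (2 * variance id (Q β)) : ℝ) : EReal) ≤ klDiv (Q α) (Q β) := by
  have hΓ : Γ ⊆ interior (integrableExpSet id Q₀) := interior_maximal hZ hΓopen
  have hQ_tilted : ∀ t ∈ Γ, Q t = Q₀.tilted (t * id ·) := hQ
  have hIcc : Icc α β ⊆ Γ := hΓconn.out hα hβ
  rw [hμ α hα, hμ β hβ, hQ_tilted α hα, hQ_tilted β hβ,
    klDiv_tilted_mul (hΓ hα) (interior_subset (hΓ hβ)), EReal.coe_le_coe_iff]
  refine sq_sub_div_two_mul_le_of_hasDerivAt hαβ (variance_nonneg _ _)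
    (fun t ht ↦ hasDerivAt_cgf (hΓ (hIcc ht)))
    (fun t ht ↦ hasDerivAt_integral_tilted_mul_self (hΓ (hIcc ht)))
    (fun t ht ↦ ⟨variance_nonneg _ _, ?_⟩)
  rw [← hQ_tilted t (hIcc ht), ← hQ_tilted β hβ]
  exact hmono t (hIcc ht) β hβ ht.2

theorem stmt_2
    (Q₀ : Measure ℝ) [IsProbabilityMeasure Q₀]
    (hQ₀ : ∀ c : ℝ, Q₀ ≠ Measure.dirac c)
    (Γ : Set ℝ) (hΓopen : IsOpen Γ) (hΓconn : Γ.OrdConnected)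
    (hZ : ∀ β ∈ Γ, Integrable (fun x => Real.exp (β * x)) Q₀)
    (Q : ℝ → Measure ℝ)
    (hQ : ∀ β ∈ Γ, Q β = Q₀.withDensity (fun x =>
      ENNReal.ofReal (Real.exp (β * x) / ∫ y, Real.exp (β * y) ∂Q₀)))
    (μ : ℝ → ℝ) (hμ : ∀ β ∈ Γ, μ β = ∫ x, x ∂(Q β))
    (hmono : ∀ s ∈ Γ, ∀ t ∈ Γ, s ≤ t → variance id (Q s) ≤ variance id (Q t))
    (α β : ℝ) (hα : α ∈ Γ) (hβ : β ∈ Γ) (hαβ : α ≤ β) :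
    (((μ α - μ β) ^ 2 / (2 * variance id (Q β)) : ℝ) : EReal) ≤ klDiv (Q α) (Q β) :=
  stmt_2_general Q₀ Γ hΓopen hΓconn hZ Q hQ μ hμ hmono α β hα hβ hαβ
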